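/- Let x_1,…,x_N be points in a set X, let G be a class of functions from X to ℝ that is uniformly bounded on {x_1,…,x_N}, let σ : ℝ → ℝ be Lipschitz with constant L_σ and σ(0) = 0, and let a, b > 0 and m ∈ ℕ. Define the class F = { x ↦ Σ_{j=1}^m w_j σ(g_j(x)) − θ : w ∈ ℝ^m with ‖w‖₁ ≤ b, θ ∈ ℝ with |θ| ≤ a, g_1,…,g_m ∈ G }. Then E[ sup_{f∈F} | (1/N) Σ_{n=1}^N r_n f(x_n) | ] ≤ 2 b L_σ · E[ sup_{g∈G} | (1/N) Σ_{n=1}^N r_n g(x_n) | ] + a/√N, where r_1,…,r_N are i.i.d. uniform on {−1,+1}. -/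

import Mathlib

/-!
The signed sum of a neuron `x ↦ ∑ⱼ wⱼ σ(gⱼ x) − θ` is `∑ⱼ wⱼ ⟨r, σ ∘ gⱼ⟩ − θ ∑ₙ rₙ`. The first
term is at most `‖w‖₁ sup_g |⟨r, σ ∘ g⟩|`; the second is at most `a |∑ₙ rₙ|`, whose mean is at
most `√N` by Cauchy–Schwarz, since the signs are orthogonal and `E (∑ₙ rₙ)² = N`.

It remains to prove the Ledoux–Talagrand contraction principle
`E sup_g |⟨r, σ ∘ g⟩| ≤ 2 Lσ E sup_g |⟨r, g⟩|`. Its one-sided form (without absolute values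
and without the factor 2) is proved one coordinate at a time: pairing the two values of the
`k`-th sign reduces it to the deterministic inequality
`sup (p + B) + sup (−p + B) ≤ sup (q + B) + sup (−q + B)` for `p` a contraction of `q`.
Adjoining the zero function to the class bounds `sup |·|` by the sum of the one-sided suprema
for `σ` and `−σ`, which costs the factor 2.
-/

/-- The real sign `±1` associated with a Boolean: `true ↦ +1`, `false ↦ −1`. -/
def rsign (b : Bool) : ℝ := if b then 1 else -1

open Finset Function NNReal

lemma iSup_abs_mul_of_nonneg {κ : Type*} {c : ℝ} (hc : 0 ≤ c) (f : κ → ℝ) :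
    ⨆ i, |c * f i| = c * ⨆ i, |f i| := by
  simp only [Real.mul_iSup_of_nonneg hc, abs_mul, abs_of_nonneg hc]

section RademacherSums

variable {ν : Type*} [Fintype ν]

@[simp] lemma rsign_true : rsign true = 1 := rfl

@[simp] lemma rsign_false : rsign false = -1 := rfl

@[simp] lemma abs_rsign (b : Bool) : |rsign b| = 1 := by cases b <;> simp

@[simp] lemma rsign_mul_self (b : Bool) : rsign b * rsign b = 1 := by cases b <;> simp

def signedSum (s : ν → Bool) : (ν → ℝ) →ₗ[ℝ] ℝ where
  toFun u := ∑ n, rsign (s n) * u n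
  map_add' u v := by simp only [Pi.add_apply, mul_add, sum_add_distrib]
  map_smul' c u := by
    simp only [Pi.smul_apply, smul_eq_mul, RingHom.id_apply, mul_sum, mul_left_comm]

lemma signedSum_apply (s : ν → Bool) (u : ν → ℝ) : signedSum s u = ∑ n, rsign (s n) * u n := rfl

lemma abs_signedSum_le (s : ν → Bool) {u : ν → ℝ} {D : ℝ} (hu : ∀ n, |u n| ≤ D) :
    |signedSum s u| ≤ Fintype.card ν * D := by
  calc |signedSum s u| ≤ ∑ n, |rsign (s n) * u n| := abs_sum_le_sum_abs _ _
    _ ≤ ∑ _n : ν, D := sum_le_sum fun n _ => by simpa [abs_mul] using hu n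
    _ = Fintype.card ν * D := by simp

lemma bddAbove_range_abs_signedSum {κ : Type*} (s : ν → Bool) {w : κ → ν → ℝ} {D : ℝ}
    (hw : ∀ i n, |w i n| ≤ D) : BddAbove (Set.range fun i => |signedSum s (w i)|) :=
  ⟨_, Set.forall_mem_range.2 fun i => abs_signedSum_le s (hw i)⟩

lemma bddAbove_range_signedSum {κ : Type*} (s : ν → Bool) {w : κ → ν → ℝ} {D : ℝ}
    (hw : ∀ i n, |w i n| ≤ D) : BddAbove (Set.range fun i => signedSum s (w i)) :=
  ⟨_, Set.forall_mem_range.2 fun i => (le_abs_self _).trans (abs_signedSum_le s (hw i))⟩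

lemma abs_signedSum_neuron_le {κ μ : Type*} [Fintype μ] (s : ν → Bool) {u : κ → ν → ℝ}
    (hu : BddAbove (Set.range fun i => |signedSum s (u i)|)) (w : μ → ℝ) (g : μ → κ) (θ : ℝ) :
    |signedSum s (fun n => ∑ j, w j * u (g j) n - θ)|
      ≤ (∑ j, |w j|) * (⨆ i, |signedSum s (u i)|) + |θ| * |signedSum s 1| := by
  have hneuron : (fun n => ∑ j, w j * u (g j) n - θ) = ∑ j, w j • u (g j) - θ • 1 := by
    ext n; simp
  rw [hneuron, map_sub, map_sum, map_smul, smul_eq_mul, sum_mul]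
  refine (abs_sub _ _).trans (add_le_add ?_ (abs_mul _ _).le)
  refine (abs_sum_le_sum_abs _ _).trans (sum_le_sum fun j _ => ?_)
  rw [map_smul, smul_eq_mul, abs_mul]
  exact mul_le_mul_of_nonneg_left (le_ciSup hu (g j)) (abs_nonneg _)

lemma ciSup_abs_signedSum_layer_le {κ μ : Type*} [Fintype μ] (s : ν → Bool) {u : κ → ν → ℝ}
    (hu : BddAbove (Set.range fun i => |signedSum s (u i)|)) {a b : ℝ} (ha : 0 ≤ a) (hb : 0 ≤ b) :
    ⨆ p : {p : (μ → ℝ) × ℝ × (μ → κ) // (∑ j, |p.1 j| ≤ b) ∧ |p.2.1| ≤ a},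
        |signedSum s (fun n => ∑ j, p.1.1 j * u (p.1.2.2 j) n - p.1.2.1)|
      ≤ b * (⨆ i, |signedSum s (u i)|) + a * |signedSum s 1| := by
  have hS : 0 ≤ ⨆ i, |signedSum s (u i)| := Real.iSup_nonneg fun i => abs_nonneg _
  refine Real.iSup_le (fun ⟨⟨w, θ, g⟩, hw, hθ⟩ => ?_) (by positivity)
  exact (abs_signedSum_neuron_le s hu w g θ).trans (by gcongr)

variable [DecidableEq ν]

lemma signedSum_update (s : ν → Bool) (k : ν) (b : Bool) (u : ν → ℝ) :
    signedSum (update s k b) u = rsign b * u k + ∑ n ∈ univ.erase k, rsign (s n) * u n := by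
  rw [signedSum_apply, ← add_sum_erase _ _ (mem_univ k), update_self]
  congr 1
  exact sum_congr rfl fun n hn => by rw [update_of_ne (ne_of_mem_erase hn)]

lemma sum_update_true_add_update_false (k : ν) (H : (ν → Bool) → ℝ) :
    ∑ s, (H (update s k true) + H (update s k false)) = 2 * ∑ s, H s := by
  have hflip : Involutive fun s : ν → Bool => update s k (!s k) := fun s => by simp
  have hpair : ∀ s, H (update s k true) + H (update s k false) = H s + H (update s k (!s k)) := by
    intro s
    have hs := update_eq_self k s
    cases h : s k <;> rw [h] at hs <;> simp [hs, add_comm]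
  have hflip_sum : ∑ s, H (update s k (!s k)) = ∑ s, H s := Equiv.sum_comp (hflip.toPerm _) H
  rw [sum_congr rfl fun s _ => hpair s, sum_add_distrib, hflip_sum, two_mul]

lemma sum_rsign_mul_rsign (n k : ν) :
    ∑ s : ν → Bool, rsign (s n) * rsign (s k) = if n = k then 2 ^ Fintype.card ν else 0 := by
  split_ifs with hnk
  · subst hnk
    simp
  · have h := sum_update_true_add_update_false k fun s => rsign (s n) * rsign (s k)
    simp only [update_self, update_of_ne hnk, rsign_true, rsign_false, mul_one, mul_neg,
      add_neg_cancel, sum_const_zero] at h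
    linarith

lemma sum_signedSum_one_sq :
    ∑ s : ν → Bool, signedSum s 1 ^ 2 = 2 ^ Fintype.card ν * Fintype.card ν := by
  simp_rw [signedSum_apply, Pi.one_apply, mul_one, sq, sum_mul_sum]
  rw [sum_comm]
  simp_rw [sum_comm (s := (univ : Finset (ν → Bool))), sum_rsign_mul_rsign, sum_ite_eq]
  simp [mul_comm]

lemma sum_abs_signedSum_one_le :
    ∑ s : ν → Bool, |signedSum s 1| ≤ 2 ^ Fintype.card ν * √(Fintype.card ν) := by
  have h := Real.sum_mul_le_sqrt_mul_sqrt univ (fun _ => (1 : ℝ))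
    fun s : ν → Bool => |signedSum s 1|
  simp only [one_mul, one_pow, sq_abs, sum_signedSum_one_sq, sum_const, card_univ,
    Fintype.card_fun, Fintype.card_bool, nsmul_eq_mul, mul_one] at h
  refine h.trans_eq ?_
  push_cast
  rw [Real.sqrt_mul (by positivity), ← mul_assoc, Real.mul_self_sqrt (by positivity)]

lemma ciSup_add_ciSup_neg_le {κ : Type*} [Nonempty κ] {p q B : κ → ℝ}
    (hpq : ∀ i j, p i - p j ≤ |q i - q j|) (hq : BddAbove (Set.range fun i => q i + B i))
    (hq' : BddAbove (Set.range fun i => -q i + B i)) :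
    (⨆ i, p i + B i) + (⨆ i, -p i + B i) ≤ (⨆ i, q i + B i) + (⨆ i, -q i + B i) := by
  refine ciSup_add_ciSup_le fun i j => ?_
  have hqij : |q i - q j| ≤ (⨆ i, q i + B i) + (⨆ i, -q i + B i) - B i - B j :=
    abs_le'.2 ⟨by linarith [le_ciSup hq i, le_ciSup hq' j],
      by linarith [le_ciSup hq j, le_ciSup hq' i]⟩
  linarith [hpq i j]

lemma sum_ciSup_signedSum_le_of_coord {κ : Type*} [Nonempty κ] {w w' : κ → ν → ℝ} {D : ℝ}
    (k : ν) (hw : ∀ i n, |w i n| ≤ D) (hoff : ∀ i n, n ≠ k → w' i n = w i n)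
    (hk : ∀ i j, w' i k - w' j k ≤ |w i k - w j k|) :
    ∑ s, ⨆ i, signedSum s (w' i) ≤ ∑ s, ⨆ i, signedSum s (w i) := by
  refine le_of_mul_le_mul_left ?_ two_pos
  rw [← sum_update_true_add_update_false k, ← sum_update_true_add_update_false k]
  refine sum_le_sum fun s _ => ?_
  set B : κ → ℝ := fun i => ∑ n ∈ univ.erase k, rsign (s n) * w i n
  have hB : ∀ i, ∑ n ∈ univ.erase k, rsign (s n) * w' i n = B i := fun i =>
    sum_congr rfl fun n hn => by rw [hoff i n (ne_of_mem_erase hn)]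
  have hbdd₁ := bddAbove_range_signedSum (update s k true) hw
  have hbdd₀ := bddAbove_range_signedSum (update s k false) hw
  simp only [signedSum_update, hB, rsign_true, rsign_false, one_mul, neg_one_mul] at hbdd₁ hbdd₀ ⊢
  exact ciSup_add_ciSup_neg_le hk hbdd₁ hbdd₀

lemma LipschitzWith.abs_apply_le {L : ℝ≥0} {φ : ℝ → ℝ} (hφ : LipschitzWith L φ)
    (t : ℝ) : |φ t| ≤ |φ 0| + L * |t| := by
  have h : |φ t - φ 0| ≤ L * |t - 0| := by simpa [Real.dist_eq] using hφ.dist_le_mul t 0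
  rw [sub_zero] at h
  linarith [abs_sub_abs_le_abs_sub (φ t) (φ 0)]

theorem sum_ciSup_signedSum_comp_le {κ : Type*} [Nonempty κ] {v : κ → ν → ℝ} {C : ℝ}
    {L : ℝ≥0} {φ : ℝ → ℝ} (hv : ∀ i n, |v i n| ≤ C) (hφ : LipschitzWith L φ) :
    ∑ s, ⨆ i, signedSum s (φ ∘ v i) ≤ ∑ s, ⨆ i, signedSum s ((L : ℝ) • v i) := by
  let w (A : Finset ν) (i : κ) (n : ν) : ℝ := if n ∈ A then φ (v i n) else L * v i n
  have hw : ∀ A i n, |w A i n| ≤ |φ 0| + L * C := by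
    intro A i n
    have hLv : L * |v i n| ≤ L * C := by gcongr; exact hv i n
    by_cases hn : n ∈ A
    · simpa [w, hn] using (hφ.abs_apply_le _).trans (by linarith)
    · simp only [w, hn, if_false, abs_mul, NNReal.abs_eq]
      linarith [abs_nonneg (φ 0)]
  have hstep : ∀ A, ∑ s, ⨆ i, signedSum s (w A i) ≤ ∑ s, ⨆ i, signedSum s (w ∅ i) := by
    intro A
    induction A using Finset.induction_on with
    | empty => rfl
    | insert k A hk ih =>
      refine le_trans (sum_ciSup_signedSum_le_of_coord k (hw A) (fun i n hn => ?_) fun i j => ?_) ih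
      · simp [w, hn]
      · have h : |φ (v i k) - φ (v j k)| ≤ L * |v i k - v j k| := by
          simpa [Real.dist_eq] using hφ.dist_le_mul (v i k) (v j k)
        simp only [w, mem_insert_self, if_true, hk, if_false, ← mul_sub, abs_mul, NNReal.abs_eq]
        exact (le_abs_self _).trans h
  have hw_univ : ∀ i, w univ i = φ ∘ v i := fun i => funext fun n => by simp [w]
  have hw_empty : ∀ i, w ∅ i = (L : ℝ) • v i := fun i => funext fun n => by simp [w]
  simpa only [hw_univ, hw_empty] using hstep univ

lemma ciSup_abs_le_ciSup_add_ciSup_neg {κ : Type*} {f : Option κ → ℝ} (hf : f none = 0)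
    (hbdd : BddAbove (Set.range f)) (hbdd' : BddAbove (Set.range fun i => -f i)) :
    ⨆ i, |f (some i)| ≤ (⨆ i, f i) + ⨆ i, -f i := by
  have h₀ : 0 ≤ ⨆ i, f i := hf ▸ le_ciSup hbdd none
  have h₀' : 0 ≤ ⨆ i, -f i := by simpa [hf] using le_ciSup hbdd' none
  refine Real.iSup_le (fun i => abs_le'.2 ⟨?_, ?_⟩) (by positivity)
  · linarith [le_ciSup hbdd (some i)]
  · linarith [le_ciSup hbdd' (some i)]

theorem sum_ciSup_abs_signedSum_comp_le {κ : Type*} {v : κ → ν → ℝ} {C : ℝ} {L : ℝ≥0}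
    {φ : ℝ → ℝ} (hv : ∀ i n, |v i n| ≤ C) (hφ : LipschitzWith L φ) (hφ0 : φ 0 = 0) :
    ∑ s, ⨆ i, |signedSum s (φ ∘ v i)| ≤ 2 * L * ∑ s, ⨆ i, |signedSum s (v i)| := by
  -- adjoining the zero function makes both one-sided suprema nonnegative
  let v' : Option κ → ν → ℝ := fun i => i.elim 0 v
  have hv' : ∀ i n, |v' i n| ≤ |C| := by
    rintro (_ | i) n
    · simp [v']
    · exact (hv i n).trans (le_abs_self C)
  have hφv' : ∀ i n, |(φ ∘ v' i) n| ≤ |φ 0| + L * |C| := fun i n =>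
    (hφ.abs_apply_le _).trans
      (add_le_add_right (mul_le_mul_of_nonneg_left (hv' i n) L.2) _)
  have hsplit : ∀ s, ⨆ i, |signedSum s (φ ∘ v i)|
      ≤ (⨆ i, signedSum s (φ ∘ v' i)) + ⨆ i, signedSum s ((-φ) ∘ v' i) := by
    intro s
    have hneg : ∀ i, signedSum s ((-φ) ∘ v' i) = -signedSum s (φ ∘ v' i) := fun i => by
      rw [← map_neg]; rfl
    simp only [hneg]
    refine ciSup_abs_le_ciSup_add_ciSup_neg (f := fun i => signedSum s (φ ∘ v' i)) ?_ ?_ ?_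
    · simp [v', comp_def, hφ0, ← Pi.zero_def]
    · exact bddAbove_range_signedSum s hφv'
    · simpa only [← hneg] using bddAbove_range_signedSum s (w := fun i => (-φ) ∘ v' i)
        (fun i n => by simpa using hφv' i n)
  have hscale : ∀ s, ⨆ i, signedSum s ((L : ℝ) • v' i) ≤ L * ⨆ i, |signedSum s (v i)| := by
    intro s
    have hnonneg : 0 ≤ L * ⨆ i, |signedSum s (v i)| :=
      mul_nonneg L.2 (Real.iSup_nonneg fun i => abs_nonneg _)
    refine Real.iSup_le (fun i => ?_) hnonneg
    rcases i with _ | i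
    · simpa [v'] using hnonneg
    · rw [map_smul, smul_eq_mul]
      gcongr
      exact (le_abs_self _).trans (le_ciSup (bddAbove_range_abs_signedSum s hv) i)
  calc ∑ s, ⨆ i, |signedSum s (φ ∘ v i)|
      ≤ ∑ s, ((⨆ i, signedSum s (φ ∘ v' i)) + ⨆ i, signedSum s ((-φ) ∘ v' i)) :=
        sum_le_sum fun s _ => hsplit s
    _ ≤ ∑ s, (⨆ i, signedSum s ((L : ℝ) • v' i)) + ∑ s, ⨆ i, signedSum s ((L : ℝ) • v' i) := by
        rw [sum_add_distrib]
        exact add_le_add (sum_ciSup_signedSum_comp_le hv' hφ)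
          (sum_ciSup_signedSum_comp_le hv' hφ.neg)
    _ ≤ ∑ s, L * (⨆ i, |signedSum s (v i)|) + ∑ s, L * ⨆ i, |signedSum s (v i)| := by
        gcongr with s _ s _ <;> exact hscale s
    _ = 2 * L * ∑ s, ⨆ i, |signedSum s (v i)| := by rw [← mul_sum]; ring

theorem sum_ciSup_abs_signedSum_layer_le {κ μ : Type*} [Fintype μ] {v : κ → ν → ℝ} {C : ℝ}
    {L : ℝ≥0} {φ : ℝ → ℝ} (hv : ∀ i n, |v i n| ≤ C) (hφ : LipschitzWith L φ) (hφ0 : φ 0 = 0)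
    {a b : ℝ} (ha : 0 ≤ a) (hb : 0 ≤ b) :
    ∑ s, ⨆ p : {p : (μ → ℝ) × ℝ × (μ → κ) // (∑ j, |p.1 j| ≤ b) ∧ |p.2.1| ≤ a},
        |signedSum s (fun n => ∑ j, p.1.1 j * φ (v (p.1.2.2 j) n) - p.1.2.1)|
      ≤ 2 * b * L * (∑ s, ⨆ i, |signedSum s (v i)|)
        + a * (2 ^ Fintype.card ν * √(Fintype.card ν)) := by
  have hφv : ∀ i n, |(φ ∘ v i) n| ≤ |φ 0| + L * C := fun i n =>
    (hφ.abs_apply_le _).trans (add_le_add_right (mul_le_mul_of_nonneg_left (hv i n) L.2) _)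
  calc _ ≤ ∑ s, (b * (⨆ i, |signedSum s (φ ∘ v i)|) + a * |signedSum s 1|) :=
        sum_le_sum fun s _ => ciSup_abs_signedSum_layer_le s (u := fun i => φ ∘ v i)
          (bddAbove_range_abs_signedSum s hφv) ha hb
    _ = b * (∑ s, ⨆ i, |signedSum s (φ ∘ v i)|) + a * ∑ s, |signedSum s 1| := by
        rw [sum_add_distrib, mul_sum, mul_sum]
    _ ≤ b * (2 * L * ∑ s, ⨆ i, |signedSum s (v i)|)
          + a * (2 ^ Fintype.card ν * √(Fintype.card ν)) := by
        gcongr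
        · exact sum_ciSup_abs_signedSum_comp_le hv hφ hφ0
        · exact sum_abs_signedSum_one_le
    _ = _ := by ring

end RademacherSums

theorem rademacher_layer_peeling_general
    {X : Type*} {N m : ℕ} {ι : Type*}
    (x : Fin N → X) (G : ι → X → ℝ)
    (C : ℝ) (hC : ∀ i n, |G i (x n)| ≤ C)
    (σ : ℝ → ℝ) (Lσ : ℝ) (hLσ : 0 ≤ Lσ)
    (hlip : ∀ s t, |σ s - σ t| ≤ Lσ * |s - t|) (hσ0 : σ 0 = 0)
    (a b : ℝ) (ha : 0 < a) (hb : 0 < b) :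
    (∑ s : Fin N → Bool,
        ⨆ p : {p : (Fin m → ℝ) × ℝ × (Fin m → ι) //
            (∑ j, |p.1 j| ≤ b) ∧ |p.2.1| ≤ a},
          |((1 : ℝ) / N) * ∑ n, rsign (s n) *
            ((∑ j, p.1.1 j * σ (G (p.1.2.2 j) (x n))) - p.1.2.1)|) / 2 ^ N
      ≤ 2 * b * Lσ * ((∑ s : Fin N → Bool,
          ⨆ i, |((1 : ℝ) / N) * ∑ n, rsign (s n) * G i (x n)|) / 2 ^ N)
        + a / Real.sqrt N := by
  have hσ : LipschitzWith ⟨Lσ, hLσ⟩ σ := .of_dist_le_mul fun s t => hlip s t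
  have hlayer := sum_ciSup_abs_signedSum_layer_le (μ := Fin m) (v := fun i => G i ∘ x)
    (fun i n => hC i n) hσ hσ0 ha.le hb.le
  rw [Fintype.card_fin] at hlayer
  have hc : 0 ≤ (1 : ℝ) / N := by positivity
  have hc_sqrt : (1 : ℝ) / N * √N = 1 / √N := by rw [one_div_mul_eq_div, Real.sqrt_div_self']
  simp only [iSup_abs_mul_of_nonneg hc, ← mul_sum]
  calc _ ≤ 1 / N * (2 * b * Lσ * (∑ s : Fin N → Bool, ⨆ i, |∑ n, rsign (s n) * G i (x n)|)
          + a * (2 ^ N * √N)) / 2 ^ N := by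
        gcongr
        exact hlayer
    _ = _ := by
        rw [← mul_one_div a, ← hc_sqrt]
        field_simp

/-- layer peeling: for points `x_1,…,x_N`, a class `G = {G i}` of real
functions uniformly bounded on the points, a Lipschitz activation `σ` with constant `Lσ`
and `σ(0) = 0`, and the one-layer class
`F = { x ↦ Σ_j w_j σ(g_j(x)) − θ : ‖w‖₁ ≤ b, |θ| ≤ a, g_j ∈ G }`, one has
`E[ sup_{f∈F} |(1/N) Σ_n r_n f(x_n)| ] ≤ 2 b Lσ · E[ sup_{g∈G} |(1/N) Σ_n r_n g(x_n)| ] + a/√N`.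
The expectation over the i.i.d. uniform signs is written as the average over all `2^N`
sign patterns `s : Fin N → Bool`. -/
theorem rademacher_layer_peeling
    {X : Type*} {N m : ℕ} {ι : Type*} [Nonempty ι]
    (x : Fin N → X) (G : ι → X → ℝ)
    (C : ℝ) (hC : ∀ i n, |G i (x n)| ≤ C)
    (σ : ℝ → ℝ) (Lσ : ℝ) (hLσ : 0 ≤ Lσ)
    (hlip : ∀ s t, |σ s - σ t| ≤ Lσ * |s - t|) (hσ0 : σ 0 = 0)
    (a b : ℝ) (ha : 0 < a) (hb : 0 < b) :
    (∑ s : Fin N → Bool,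
        ⨆ p : {p : (Fin m → ℝ) × ℝ × (Fin m → ι) //
            (∑ j, |p.1 j| ≤ b) ∧ |p.2.1| ≤ a},
          |((1 : ℝ) / N) * ∑ n, rsign (s n) *
            ((∑ j, p.1.1 j * σ (G (p.1.2.2 j) (x n))) - p.1.2.1)|) / 2 ^ N
      ≤ 2 * b * Lσ * ((∑ s : Fin N → Bool,
          ⨆ i, |((1 : ℝ) / N) * ∑ n, rsign (s n) * G i (x n)|) / 2 ^ N)
        + a / Real.sqrt N :=
  rademacher_layer_peeling_general x G C hC σ Lσ hLσ hlip hσ0 a b ha hb
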